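/- Let d ≥ 3 and 1 ≤ k ≤ ⌈(d−2)/2⌉ be integers and let p be an IDF prime for (d,k). Let α, β be rational numbers with α ≠ 0, v_p(α) < 0, and β p-integral (β = 0 or v_p(β) ≥ 0). Then for every integer n ≥ 1 the orbit value f^n_{α,β}(1) is nonzero with v_p(f^n_{α,β}(1)) < 0, and v_p(f^{n+1}_{α,β}(1)) < v_p(f^n_{α,β}(1)); in particular, the critical point 1 is not periodic under f_{α,β} (f^n_{α,β}(1) ≠ 1 for all n ≥ 1). -/

import Mathlib

open Finset Function

/-- The coefficient `b_i` of `z^(d-i)` in the normalized dynamical Belyi polynomial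
`B_{d,k}`. -/
def belyiCoeff (d k i : ℕ) : ℚ :=
  ((-1 : ℚ) ^ (k - i) / ((k - i).factorial * i.factorial)) *
    ∏ j ∈ (Finset.range (k + 1)).erase i, ((d : ℚ) - (j : ℚ))

/-- The normalized dynamical Belyi polynomial `B_{d,k}` as a function on `ℚ`. -/
def belyi (d k : ℕ) (z : ℚ) : ℚ :=
  ∑ i ∈ Finset.range (k + 1), belyiCoeff d k i * z ^ (d - i)

/-- The map `f_{a,c}(z) = a · B_{d,k}(z) + c`. -/
def belyiMap (d k : ℕ) (a c z : ℚ) : ℚ := a * belyi d k z + c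

/-- `p` is an index divisor free (IDF) prime for the pair `(d,k)`:
`p` is a prime with `p > k`, `p ∣ d - r` for some `r ≤ k`, and `r ∤ v_p(d-r)`. -/
def IsIDFPrime (d k p : ℕ) : Prop :=
  p.Prime ∧ k < p ∧ ∃ r ≤ k, p ∣ (d - r) ∧ ¬ (r ∣ padicValNat p (d - r))

/-- A rational number is `p`-integral if it is zero or has nonnegative `p`-adic valuation. -/
def PIntegral (p : ℕ) (x : ℚ) : Prop := x = 0 ∨ 0 ≤ padicValRat p x

/-!
Let `E = v_p(d - r)`. Since `p > k`, the factorials in `b_i` are `p`-adic units and among the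
factors `d - j` (`j ≤ k`) only `d - r` is divisible by `p`; so `v_p(b_r) = 0` and
`v_p(b_i) = E ≥ 1` for `i ≠ r`. Hence `B(1)` is a `p`-adic unit and `v_p(f(1)) = v_p(α) < 0`.
If `v = v_p(z) < 0`, the term `b_i z^(d-i)` has valuation `(d - r)v` for `i = r` and `E + (d - i)v`
otherwise, so only `i = r` and `i = 0` compete for the minimum, and `r ∤ E` rules out a tie.
Thus `v_p(B(z)) = min((d - r)v, E + dv) ≤ v`, and since adding the `p`-integral `β` does not
change the valuation, `v_p(f(z)) = v_p(α) + v_p(B(z)) < v`.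
-/

namespace padicValRat

theorem ne_zero_of_neg {p : ℕ} {x : ℚ} (hx : padicValRat p x < 0) : x ≠ 0 := by
  rintro rfl
  simp at hx

theorem add_ne_zero_of_lt {p : ℕ} {q r : ℚ} (h : padicValRat p q < padicValRat p r) :
    q + r ≠ 0 := by
  intro hqr
  rw [eq_neg_of_add_eq_zero_right hqr, padicValRat.neg] at h
  exact h.false

variable {p : ℕ} [Fact p.Prime]

theorem finset_prod {ι : Type*} {s : Finset ι} {f : ι → ℚ} (hf : ∀ i ∈ s, f i ≠ 0) :
    padicValRat p (∏ i ∈ s, f i) = ∑ i ∈ s, padicValRat p (f i) := by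
  classical
  induction s using Finset.induction_on with
  | empty => simp
  | insert a s ha ih =>
    have hs : ∀ i ∈ s, f i ≠ 0 := fun i hi => hf i (mem_insert_of_mem hi)
    rw [prod_insert ha, sum_insert ha, padicValRat.mul (hf a (mem_insert_self a s))
      (prod_ne_zero_iff.2 hs), ih hs]

theorem lt_sum_of_forall_lt {ι : Type*} {s : Finset ι} {f : ι → ℚ} {m : ℤ}
    (hf : ∀ i ∈ s, f i ≠ 0 → m < padicValRat p (f i)) (hs : ∑ i ∈ s, f i ≠ 0) :
    m < padicValRat p (∑ i ∈ s, f i) := by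
  classical
  induction s using Finset.induction_on with
  | empty => simp at hs
  | insert a s ha ih =>
    rw [sum_insert ha] at hs ⊢
    have hf' : ∀ i ∈ s, f i ≠ 0 → m < padicValRat p (f i) :=
      fun i hi => hf i (mem_insert_of_mem hi)
    by_cases ha0 : f a = 0
    · rw [ha0, zero_add] at hs ⊢
      exact ih hf' hs
    by_cases hs0 : ∑ i ∈ s, f i = 0
    · rw [hs0, add_zero]
      exact hf a (mem_insert_self a s) ha0
    exact (lt_min (hf a (mem_insert_self a s) ha0) (ih hf' hs0)).trans_le
      (min_le_padicValRat_add hs)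

theorem sum_eq_of_forall_lt {ι : Type*} [DecidableEq ι] {s : Finset ι} {f : ι → ℚ} {j : ι}
    (hj : j ∈ s) (hfj : f j ≠ 0)
    (hf : ∀ i ∈ s, i ≠ j → f i ≠ 0 → padicValRat p (f j) < padicValRat p (f i)) :
    ∑ i ∈ s, f i ≠ 0 ∧ padicValRat p (∑ i ∈ s, f i) = padicValRat p (f j) := by
  rw [← add_sum_erase s f hj]
  set rest := ∑ i ∈ s.erase j, f i
  by_cases hrest : rest = 0
  · rw [hrest, add_zero]
    exact ⟨hfj, rfl⟩
  have hlt : padicValRat p (f j) < padicValRat p rest :=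
    lt_sum_of_forall_lt (fun i hi => hf i (mem_of_mem_erase hi) (ne_of_mem_erase hi)) hrest
  exact ⟨add_ne_zero_of_lt hlt, add_eq_of_lt (add_ne_zero_of_lt hlt) hfj hrest hlt⟩

theorem add_eq_of_neg_of_pIntegral {x y : ℚ} (hx : padicValRat p x < 0) (hy : PIntegral p y) :
    padicValRat p (x + y) = padicValRat p x := by
  rcases eq_or_ne y 0 with rfl | hy0
  · rw [add_zero]
  have hlt : padicValRat p x < padicValRat p y := hx.trans_le (hy.resolve_left hy0)
  exact add_eq_of_lt (add_ne_zero_of_lt hlt) (ne_zero_of_neg hx) hy0 hlt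

end padicValRat

section Belyi

variable {d k p r : ℕ}

theorem prod_erase_natCast_sub_ne_zero (hkd : k < d) (i : ℕ) :
    ∏ j ∈ (range (k + 1)).erase i, ((d : ℚ) - j) ≠ 0 :=
  prod_ne_zero_iff.2 fun j hj => sub_ne_zero.2 <| Nat.cast_injective.ne <| by
    have := mem_range.1 (mem_of_mem_erase hj)
    omega

theorem belyiCoeff_ne_zero (hkd : k < d) (i : ℕ) : belyiCoeff d k i ≠ 0 :=
  mul_ne_zero (by positivity) (prod_erase_natCast_sub_ne_zero hkd i)

theorem padicValRat_natCast_sub (hkp : k < p) (hkd : k < d) (hrk : r ≤ k) (hpr : p ∣ d - r)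
    {j : ℕ} (hjk : j ≤ k) :
    padicValRat p ((d : ℚ) - j) = if j = r then (padicValNat p (d - r) : ℤ) else 0 := by
  rw [← Nat.cast_sub (by omega), padicValRat.of_nat]
  split_ifs with hjr
  · rw [hjr]
  have hpj : ¬ p ∣ d - j := fun hpj =>
    hjr <| (((Nat.modEq_iff_dvd' (by omega)).2 hpj).trans
      ((Nat.modEq_iff_dvd' (by omega)).2 hpr).symm).eq_of_lt_of_lt (by omega) (by omega)
  rw [padicValNat.eq_zero_of_not_dvd hpj, Nat.cast_zero]

variable [Fact p.Prime]

theorem padicValRat_belyiCoeff (hkp : k < p) (hkd : k < d) (hrk : r ≤ k) (hpr : p ∣ d - r)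
    {i : ℕ} (hik : i ≤ k) :
    padicValRat p (belyiCoeff d k i) = if i = r then 0 else (padicValNat p (d - r) : ℤ) := by
  have hfact : ¬ p ∣ (k - i).factorial * i.factorial := by
    rw [(Fact.out : p.Prime).dvd_mul, (Fact.out : p.Prime).dvd_factorial,
      (Fact.out : p.Prime).dvd_factorial]
    omega
  have hunit : padicValRat p ((-1 : ℚ) ^ (k - i) / ((k - i).factorial * i.factorial)) = 0 := by
    rw [padicValRat.div (by simp) (by positivity), padicValRat.pow, ← Nat.cast_mul,
      padicValRat.of_nat, padicValNat.eq_zero_of_not_dvd hfact]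
    simp
  rw [belyiCoeff, padicValRat.mul (by positivity) (prod_erase_natCast_sub_ne_zero hkd i), hunit,
    zero_add, padicValRat.finset_prod (prod_ne_zero_iff.1 (prod_erase_natCast_sub_ne_zero hkd i)),
    sum_congr rfl fun j hj => padicValRat_natCast_sub hkp hkd hrk hpr
      (Nat.lt_succ_iff.1 (mem_range.1 (mem_of_mem_erase hj))), sum_ite_eq']
  simp only [mem_erase, mem_range]
  split_ifs <;> omega

theorem padicValRat_belyi_one (hkp : k < p) (hkd : k < d) (hrk : r ≤ k) (hpr : p ∣ d - r) :
    belyi d k 1 ≠ 0 ∧ padicValRat p (belyi d k 1) = 0 := by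
  have hE : 1 ≤ padicValNat p (d - r) := one_le_padicValNat_of_dvd (by omega) hpr
  have hr : r ∈ range (k + 1) := mem_range.2 (by omega)
  have hvr : padicValRat p (belyiCoeff d k r) = 0 := by
    rw [padicValRat_belyiCoeff hkp hkd hrk hpr hrk, if_pos rfl]
  simp only [belyi, one_pow, mul_one]
  rw [← hvr]
  refine padicValRat.sum_eq_of_forall_lt hr (belyiCoeff_ne_zero hkd r) fun i hi hir _ => ?_
  rw [hvr, padicValRat_belyiCoeff hkp hkd hrk hpr (Nat.lt_succ_iff.1 (mem_range.1 hi)),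
    if_neg hir]
  omega

theorem padicValRat_belyiCoeff_mul_pow (hkp : k < p) (hkd : k < d) (hrk : r ≤ k)
    (hpr : p ∣ d - r) {z : ℚ} (hz : z ≠ 0) {i : ℕ} (hik : i ≤ k) :
    padicValRat p (belyiCoeff d k i * z ^ (d - i)) =
      (if i = r then 0 else (padicValNat p (d - r) : ℤ)) + (d - i : ℤ) * padicValRat p z := by
  rw [padicValRat.mul (belyiCoeff_ne_zero hkd i) (pow_ne_zero _ hz),
    padicValRat_belyiCoeff hkp hkd hrk hpr hik, padicValRat.pow, Nat.cast_sub (by omega)]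

theorem padicValRat_belyi_le (hkp : k < p) (hkd : k < d) (hrk : r ≤ k) (hpr : p ∣ d - r)
    (hidf : ¬ r ∣ padicValNat p (d - r)) {z : ℚ} (hz : padicValRat p z < 0) :
    padicValRat p (belyi d k z) ≤ (d - r : ℤ) * padicValRat p z := by
  set v := padicValRat p z
  set E : ℤ := (padicValNat p (d - r) : ℤ) with hE
  have hz0 := padicValRat.ne_zero_of_neg hz
  have hval : ∀ i ∈ range (k + 1), padicValRat p (belyiCoeff d k i * z ^ (d - i)) =
      (if i = r then 0 else E) + (d - i : ℤ) * v := fun i hi =>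
    padicValRat_belyiCoeff_mul_pow hkp hkd hrk hpr hz0 (Nat.lt_succ_iff.1 (mem_range.1 hi))
  have hne : (d - r : ℤ) * v ≠ E + d * v := fun h =>
    hidf <| Int.natCast_dvd_natCast.1 ⟨-v, by rw [← hE]; linarith⟩
  have hdom : ∀ j ∈ range (k + 1), (∀ i ∈ range (k + 1), i ≠ j →
      padicValRat p (belyiCoeff d k j * z ^ (d - j)) <
        padicValRat p (belyiCoeff d k i * z ^ (d - i))) →
      padicValRat p (belyi d k z) = padicValRat p (belyiCoeff d k j * z ^ (d - j)) :=
    fun j hj h => (padicValRat.sum_eq_of_forall_lt hj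
      (mul_ne_zero (belyiCoeff_ne_zero hkd j) (pow_ne_zero _ hz0)) fun i hi hij _ => h i hi hij).2
  have hr : r ∈ range (k + 1) := mem_range.2 (by omega)
  have h0 : 0 ∈ range (k + 1) := mem_range.2 (by omega)
  rcases hne.lt_or_gt with hlt | hgt
  · rw [hdom r hr fun i hi hir => ?_, hval r hr, if_pos rfl, zero_add]
    rw [hval r hr, hval i hi, if_pos rfl, if_neg hir]
    have : (0 : ℤ) ≤ i := i.cast_nonneg
    nlinarith
  · have hr0 : r ≠ 0 := by
      rintro rfl
      have : (0 : ℤ) ≤ E := Nat.cast_nonneg _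
      rw [Nat.cast_zero, sub_zero] at hgt
      linarith
    rw [hdom 0 h0 fun i hi hi0 => ?_, hval 0 h0, if_neg hr0.symm]
    · push_cast
      linarith
    rw [hval 0 h0, hval i hi, if_neg hr0.symm]
    split_ifs with hir
    · subst hir
      push_cast
      linarith
    · have : (1 : ℤ) ≤ i := by exact_mod_cast Nat.one_le_iff_ne_zero.2 hi0
      rw [Nat.cast_zero]
      nlinarith

theorem padicValRat_belyiMap_one (hkp : k < p) (hkd : k < d) (hrk : r ≤ k) (hpr : p ∣ d - r)
    {α β : ℚ} (hα : padicValRat p α < 0) (hβ : PIntegral p β) :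
    padicValRat p (belyiMap d k α β 1) = padicValRat p α := by
  obtain ⟨hB, hvB⟩ := padicValRat_belyi_one hkp hkd hrk hpr
  have hmul : padicValRat p (α * belyi d k 1) = padicValRat p α := by
    rw [padicValRat.mul (padicValRat.ne_zero_of_neg hα) hB, hvB, add_zero]
  rw [belyiMap, padicValRat.add_eq_of_neg_of_pIntegral (hmul ▸ hα) hβ, hmul]

theorem padicValRat_belyiMap_lt (hkp : k < p) (hkd : k < d) (hrk : r ≤ k) (hpr : p ∣ d - r)
    (hidf : ¬ r ∣ padicValNat p (d - r)) {α β : ℚ} (hα : padicValRat p α < 0)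
    (hβ : PIntegral p β) {z : ℚ} (hz : padicValRat p z < 0) :
    padicValRat p (belyiMap d k α β z) < padicValRat p z := by
  have hB := padicValRat_belyi_le hkp hkd hrk hpr hidf hz
  have hdr : (1 : ℤ) ≤ d - r := by omega
  have hB' : padicValRat p (belyi d k z) ≤ padicValRat p z := hB.trans (by nlinarith)
  have hmul : padicValRat p (α * belyi d k z) = padicValRat p α + padicValRat p (belyi d k z) :=
    padicValRat.mul (padicValRat.ne_zero_of_neg hα) (padicValRat.ne_zero_of_neg (hB'.trans_lt hz))
  rw [belyiMap, padicValRat.add_eq_of_neg_of_pIntegral (by omega) hβ]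
  omega

end Belyi

theorem orbit_of_one_val_strict_anti_general (d k p : ℕ) (hd : 3 ≤ d)
    (hk2 : k ≤ (d - 1) / 2) (hp : IsIDFPrime d k p)
    (α β : ℚ) (hvα : padicValRat p α < 0) (hβ : PIntegral p β) :
    ∀ n : ℕ, 1 ≤ n →
      (belyiMap d k α β)^[n] 1 ≠ 0 ∧
      padicValRat p ((belyiMap d k α β)^[n] 1) < 0 ∧
      padicValRat p ((belyiMap d k α β)^[n + 1] 1) <
        padicValRat p ((belyiMap d k α β)^[n] 1) ∧
      (belyiMap d k α β)^[n] 1 ≠ 1 := by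
  obtain ⟨hpp, hkp, r, hrk, hpr, hidf⟩ := hp
  have : Fact p.Prime := ⟨hpp⟩
  have hkd : k < d := by omega
  set f := belyiMap d k α β
  have hstep : ∀ z, padicValRat p z < 0 → padicValRat p (f z) < padicValRat p z :=
    fun _ => padicValRat_belyiMap_lt hkp hkd hrk hpr hidf hvα hβ
  have horbit : ∀ n, padicValRat p (f^[n + 1] 1) < 0 := by
    intro n
    induction n with
    | zero => rwa [iterate_one, padicValRat_belyiMap_one hkp hkd hrk hpr hvα hβ]
    | succ n ih => exact iterate_succ_apply' f (n + 1) 1 ▸ (hstep _ ih).trans ih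
  intro n hn
  obtain ⟨m, rfl⟩ := Nat.exists_eq_add_of_le' hn
  refine ⟨padicValRat.ne_zero_of_neg (horbit m), horbit m, ?_, fun h => ?_⟩
  · exact iterate_succ_apply' f (m + 1) 1 ▸ hstep _ (horbit m)
  · simpa [h] using horbit m

/-- (Case 2 of the integrality proof.)  If `v_p(α) < 0` and `β` is
`p`-integral, then the valuation of the orbit of `1` is negative and strictly
decreasing; in particular `1` is not periodic. -/
theorem orbit_of_one_val_strict_anti (d k p : ℕ) (hd : 3 ≤ d) (hk1 : 1 ≤ k)
    (hk2 : k ≤ (d - 1) / 2) (hp : IsIDFPrime d k p)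
    (α β : ℚ) (hα : α ≠ 0) (hvα : padicValRat p α < 0) (hβ : PIntegral p β) :
    ∀ n : ℕ, 1 ≤ n →
      (belyiMap d k α β)^[n] 1 ≠ 0 ∧
      padicValRat p ((belyiMap d k α β)^[n] 1) < 0 ∧
      padicValRat p ((belyiMap d k α β)^[n + 1] 1) <
        padicValRat p ((belyiMap d k α β)^[n] 1) ∧
      (belyiMap d k α β)^[n] 1 ≠ 1 :=
  orbit_of_one_val_strict_anti_general d k p hd hk2 hp α β hvα hβ
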